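/- For every integer k ≥ 1, the grid graph P_3 × P_{2k} has exactly 2^{k−1} Hamiltonian cycles; that is, H(3,2k) = 2^{k−1}. In particular the number of Hamiltonian cycles of a 3 × n grid is always a power of 2 when n is even. -/

import Mathlib

/-- The grid graph `P_m × P_n`: vertices are pairs in `Fin m × Fin n`, and two
vertices are adjacent iff they agree in one coordinate and differ by exactly 1
in the other. -/
def gridGraph (m n : ℕ) : SimpleGraph (Fin m × Fin n) where
  Adj a b := (a.1 = b.1 ∧ Nat.dist a.2.1 b.2.1 = 1) ∨ (a.2 = b.2 ∧ Nat.dist a.1.1 b.1.1 = 1)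
  symm := ⟨fun a b h => by
    rcases h with ⟨h1, h2⟩ | ⟨h1, h2⟩
    · exact Or.inl ⟨h1.symm, by rwa [Nat.dist_comm]⟩
    · exact Or.inr ⟨h1.symm, by rwa [Nat.dist_comm]⟩⟩
  loopless := ⟨fun a h => by
    rcases h with ⟨_, h2⟩ | ⟨_, h2⟩ <;> simp [Nat.dist_self] at h2⟩

/-- `E` is (the edge set of) a Hamiltonian cycle of the grid graph `P_m × P_n`:
`E` is a set of edges of the grid graph such that the spanning subgraph with
edge set `E` is connected and every vertex has degree exactly `2`. -/
def IsHamiltonianCycle (m n : ℕ) (E : Set (Sym2 (Fin m × Fin n))) : Prop :=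
  E ⊆ (gridGraph m n).edgeSet ∧
  (SimpleGraph.fromEdgeSet E).Connected ∧
  ∀ v : Fin m × Fin n, ((SimpleGraph.fromEdgeSet E).neighborSet v).ncard = 2

/-- `H(m,n)`: the number of Hamiltonian cycles of the grid graph `P_m × P_n`. -/
noncomputable def numHamCycles (m n : ℕ) : ℕ :=
  {E : Set (Sym2 (Fin m × Fin n)) | IsHamiltonianCycle m n E}.ncard

/-!
Read a Hamiltonian cycle of the `3 × 2k` grid column by column. Degree 2 at the three vertices
of a column determines the rows in which the cycle continues to the next column from the rows in
which it enters: the corners of the first column force rows 0 and 2; after a column entered in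
rows 0 and 2, the cycle continues in row 1 and exactly one outer row (connectivity forbids that
it does not continue at all); after such a column it continues in rows 0 and 2 again. The
vertical edges are then forced by the degrees as well. So a Hamiltonian cycle is determined by
the outer row it uses between columns `2i - 1` and `2i` for `0 < i < k`, and each of these
`2 ^ (k - 1)` choices does give a Hamiltonian cycle, a "snake".
-/

namespace GridGraph

open SimpleGraph

section General

variable {m n : ℕ}

def IsRightStep (a b : Fin m × Fin n) : Prop := a.1 = b.1 ∧ (a.2 : ℕ) + 1 = b.2

def IsDownStep (a b : Fin m × Fin n) : Prop := a.2 = b.2 ∧ (a.1 : ℕ) + 1 = b.1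

lemma gridGraph_adj_iff {a b : Fin m × Fin n} :
    (gridGraph m n).Adj a b ↔
      IsRightStep a b ∨ IsRightStep b a ∨ IsDownStep a b ∨ IsDownStep b a := by
  simp only [gridGraph, IsRightStep, IsDownStep, Nat.dist, Fin.ext_iff]
  omega

lemma IsRightStep.left_unique {a a' b : Fin m × Fin n} (h : IsRightStep a b)
    (h' : IsRightStep a' b) : a = a' := by
  obtain ⟨h1, h2⟩ := h; obtain ⟨h1', h2'⟩ := h'
  ext <;> simp only [Fin.ext_iff] at * <;> omega

lemma IsRightStep.right_unique {a b b' : Fin m × Fin n} (h : IsRightStep a b)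
    (h' : IsRightStep a b') : b = b' := by
  obtain ⟨h1, h2⟩ := h; obtain ⟨h1', h2'⟩ := h'
  ext <;> simp only [Fin.ext_iff] at * <;> omega

lemma IsDownStep.left_unique {a a' b : Fin m × Fin n} (h : IsDownStep a b)
    (h' : IsDownStep a' b) : a = a' := by
  obtain ⟨h1, h2⟩ := h; obtain ⟨h1', h2'⟩ := h'
  ext <;> simp only [Fin.ext_iff] at * <;> omega

lemma IsDownStep.right_unique {a b b' : Fin m × Fin n} (h : IsDownStep a b)
    (h' : IsDownStep a b') : b = b' := by
  obtain ⟨h1, h2⟩ := h; obtain ⟨h1', h2'⟩ := h'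
  ext <;> simp only [Fin.ext_iff] at * <;> omega

variable (G : SimpleGraph (Fin m × Fin n))

-- An edge is indexed by its right (lower) endpoint, so that the four edges at `(r, j)` are
-- `HorizAdj G r j`, `HorizAdj G r (j + 1)`, `VertAdj G r j` and `VertAdj G (r + 1) j`, with no
-- truncated subtraction. Their 0/1 counts `horiz`, `vert` turn degree conditions into linear
-- arithmetic.
def HorizAdj (r j : ℕ) : Prop :=
  ∃ a b, IsRightStep a b ∧ (b.1 : ℕ) = r ∧ (b.2 : ℕ) = j ∧ G.Adj a b

def VertAdj (r j : ℕ) : Prop :=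
  ∃ a b, IsDownStep a b ∧ (b.1 : ℕ) = r ∧ (b.2 : ℕ) = j ∧ G.Adj a b

open Classical in
noncomputable def horiz (r j : ℕ) : ℕ := if HorizAdj G r j then 1 else 0

open Classical in
noncomputable def vert (r j : ℕ) : ℕ := if VertAdj G r j then 1 else 0

variable {G}

lemma HorizAdj.bounds {r j : ℕ} (h : HorizAdj G r j) : r < m ∧ 0 < j ∧ j < n := by
  obtain ⟨a, b, ⟨-, hj⟩, rfl, rfl, -⟩ := h
  exact ⟨b.1.2, by omega, b.2.2⟩

lemma VertAdj.bounds {r j : ℕ} (h : VertAdj G r j) : 0 < r ∧ r < m ∧ j < n := by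
  obtain ⟨a, b, ⟨-, hr⟩, rfl, rfl, -⟩ := h
  exact ⟨by omega, b.1.2, b.2.2⟩

lemma horiz_le_one (r j : ℕ) : horiz G r j ≤ 1 := by
  unfold horiz; split_ifs <;> omega

lemma vert_le_one (r j : ℕ) : vert G r j ≤ 1 := by
  unfold vert; split_ifs <;> omega

lemma horiz_eq_one_iff {r j : ℕ} : horiz G r j = 1 ↔ HorizAdj G r j := by
  unfold horiz; split_ifs <;> simpa

lemma vert_eq_one_iff {r j : ℕ} : vert G r j = 1 ↔ VertAdj G r j := by
  unfold vert; split_ifs <;> simpa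

lemma horiz_eq_zero {r j : ℕ} (h : ¬ (r < m ∧ 0 < j ∧ j < n)) : horiz G r j = 0 :=
  if_neg (mt HorizAdj.bounds h)

lemma vert_eq_zero {r j : ℕ} (h : ¬ (0 < r ∧ r < m ∧ j < n)) : vert G r j = 0 :=
  if_neg (mt VertAdj.bounds h)

lemma horizAdj_iff_exists_left (v : Fin m × Fin n) :
    HorizAdj G v.1 v.2 ↔ ∃ a, IsRightStep a v ∧ G.Adj a v := by
  refine ⟨?_, fun ⟨a, h, hav⟩ => ⟨a, v, h, rfl, rfl, hav⟩⟩
  rintro ⟨a, b, h, hr, hj, hab⟩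
  obtain rfl : b = v := Prod.ext (Fin.ext hr) (Fin.ext hj)
  exact ⟨a, h, hab⟩

lemma horizAdj_iff_exists_right (v : Fin m × Fin n) :
    HorizAdj G v.1 (v.2 + 1) ↔ ∃ b, IsRightStep v b ∧ G.Adj v b := by
  refine ⟨?_, fun ⟨b, h, hvb⟩ => ⟨v, b, h, h.1 ▸ rfl, h.2.symm, hvb⟩⟩
  rintro ⟨a, b, h, hr, hj, hab⟩
  obtain rfl : a = v := by
    obtain ⟨h1, h2⟩ := h
    ext <;> simp only [Fin.ext_iff] at * <;> omega
  exact ⟨b, h, hab⟩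

lemma vertAdj_iff_exists_up (v : Fin m × Fin n) :
    VertAdj G v.1 v.2 ↔ ∃ a, IsDownStep a v ∧ G.Adj a v := by
  refine ⟨?_, fun ⟨a, h, hav⟩ => ⟨a, v, h, rfl, rfl, hav⟩⟩
  rintro ⟨a, b, h, hr, hj, hab⟩
  obtain rfl : b = v := Prod.ext (Fin.ext hr) (Fin.ext hj)
  exact ⟨a, h, hab⟩

lemma vertAdj_iff_exists_down (v : Fin m × Fin n) :
    VertAdj G (v.1 + 1) v.2 ↔ ∃ b, IsDownStep v b ∧ G.Adj v b := by
  refine ⟨?_, fun ⟨b, h, hvb⟩ => ⟨v, b, h, h.2.symm, h.1 ▸ rfl, hvb⟩⟩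
  rintro ⟨a, b, h, hr, hj, hab⟩
  obtain rfl : a = v := by
    obtain ⟨h1, h2⟩ := h
    ext <;> simp only [Fin.ext_iff] at * <;> omega
  exact ⟨b, h, hab⟩

lemma horizAdj_iff {a b : Fin m × Fin n} (h : IsRightStep a b) :
    HorizAdj G b.1 b.2 ↔ G.Adj a b := by
  rw [horizAdj_iff_exists_left]
  exact ⟨fun ⟨a', h', hab⟩ => h'.left_unique h ▸ hab, fun hab => ⟨a, h, hab⟩⟩

lemma vertAdj_iff {a b : Fin m × Fin n} (h : IsDownStep a b) :
    VertAdj G b.1 b.2 ↔ G.Adj a b := by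
  rw [vertAdj_iff_exists_up]
  exact ⟨fun ⟨a', h', hab⟩ => h'.left_unique h ▸ hab, fun hab => ⟨a, h, hab⟩⟩

open Classical in
lemma ncard_setOf_of_unique {α : Type*} {p : α → Prop} (hp : ∀ x y, p x → p y → x = y) :
    {x | p x}.ncard = if ∃ x, p x then 1 else 0 := by
  split_ifs with h
  · obtain ⟨x, hx⟩ := h
    rw [Set.ncard_eq_one]
    exact ⟨x, Set.eq_singleton_iff_unique_mem.2 ⟨hx, fun y hy => hp y x hy hx⟩⟩
  · have hempty : {x | p x} = ∅ := Set.eq_empty_iff_forall_notMem.2 fun x hx => h ⟨x, hx⟩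
    rw [hempty, Set.ncard_empty]

lemma ncard_neighborSet (hG : G ≤ gridGraph m n) (v : Fin m × Fin n) :
    (G.neighborSet v).ncard =
      horiz G v.1 v.2 + horiz G v.1 (v.2 + 1) + vert G v.1 v.2 + vert G (v.1 + 1) v.2 := by
  have hsplit : G.neighborSet v =
      {x | IsRightStep x v ∧ G.Adj x v} ∪ {x | IsRightStep v x ∧ G.Adj v x} ∪
      {x | IsDownStep x v ∧ G.Adj x v} ∪ {x | IsDownStep v x ∧ G.Adj v x} := by
    ext x
    simp only [mem_neighborSet, Set.mem_union, Set.mem_ofPred_eq, G.adj_comm x v]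
    constructor
    · intro h
      rcases gridGraph_adj_iff.1 (hG h) with hs | hs | hs | hs <;> simp [hs, h]
    · rintro (((⟨-, h⟩ | ⟨-, h⟩) | ⟨-, h⟩) | ⟨-, h⟩) <;> exact h
  rw [hsplit, Set.ncard_union_eq, Set.ncard_union_eq, Set.ncard_union_eq,
    ncard_setOf_of_unique fun x y hx hy => hx.1.left_unique hy.1,
    ncard_setOf_of_unique fun x y hx hy => hx.1.right_unique hy.1,
    ncard_setOf_of_unique fun x y hx hy => hx.1.left_unique hy.1,
    ncard_setOf_of_unique fun x y hx hy => hx.1.right_unique hy.1,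
    horiz, horiz, vert, vert, horizAdj_iff_exists_left, horizAdj_iff_exists_right,
    vertAdj_iff_exists_up, vertAdj_iff_exists_down]
  all_goals
    simp only [Set.disjoint_left, Set.mem_union, Set.mem_ofPred_eq, IsRightStep, IsDownStep,
      Fin.ext_iff]
    omega

lemma le_of_horizAdj_of_vertAdj {G' : SimpleGraph (Fin m × Fin n)} (hG : G ≤ gridGraph m n)
    (hh : ∀ r j, HorizAdj G r j → HorizAdj G' r j)
    (hv : ∀ r j, VertAdj G r j → VertAdj G' r j) : G ≤ G' := by
  intro a b hab
  rcases gridGraph_adj_iff.1 (hG hab) with h | h | h | h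
  · exact (horizAdj_iff h).1 (hh _ _ ((horizAdj_iff h).2 hab))
  · exact ((horizAdj_iff h).1 (hh _ _ ((horizAdj_iff h).2 hab.symm))).symm
  · exact (vertAdj_iff h).1 (hv _ _ ((vertAdj_iff h).2 hab))
  · exact ((vertAdj_iff h).1 (hv _ _ ((vertAdj_iff h).2 hab.symm))).symm

lemma ext_of_le_gridGraph {G' : SimpleGraph (Fin m × Fin n)} (hG : G ≤ gridGraph m n)
    (hG' : G' ≤ gridGraph m n) (hh : ∀ r j, HorizAdj G r j ↔ HorizAdj G' r j)
    (hv : ∀ r j, VertAdj G r j ↔ VertAdj G' r j) : G = G' :=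
  le_antisymm (le_of_horizAdj_of_vertAdj hG (fun r j => (hh r j).1) fun r j => (hv r j).1)
    (le_of_horizAdj_of_vertAdj hG' (fun r j => (hh r j).2) fun r j => (hv r j).2)

lemma exists_horizAdj_of_connected (hG : G ≤ gridGraph m n) (hconn : G.Connected) {j : ℕ}
    (hj0 : 0 < j) (hj : j < n) : ∃ r, HorizAdj G r j := by
  obtain ⟨v⟩ := hconn.nonempty
  obtain ⟨p⟩ := hconn.preconnected (v.1, ⟨0, by omega⟩) (v.1, ⟨j, hj⟩)
  obtain ⟨d, -, hd₁, hd₂⟩ := p.exists_boundary_dart {x | (x.2 : ℕ) < j} hj0 (lt_irrefl j)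
  simp only [Set.mem_ofPred_eq, not_lt] at hd₁ hd₂
  rcases gridGraph_adj_iff.1 (hG d.adj) with h | h | h | h
  · exact ⟨d.snd.1, d.fst, d.snd, h, rfl, by have := h.2; omega, d.adj⟩
  all_goals have := h.2; simp only [IsRightStep, IsDownStep, Fin.ext_iff] at h; omega

def IsHamCycleSubgraph (m n : ℕ) (G : SimpleGraph (Fin m × Fin n)) : Prop :=
  G ≤ gridGraph m n ∧ G.Connected ∧ ∀ v, (G.neighborSet v).ncard = 2

lemma isHamiltonianCycle_edgeSet_iff {G : SimpleGraph (Fin m × Fin n)} :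
    IsHamiltonianCycle m n G.edgeSet ↔ IsHamCycleSubgraph m n G := by
  rw [IsHamiltonianCycle, IsHamCycleSubgraph, fromEdgeSet_edgeSet, edgeSet_subset_edgeSet]

lemma _root_.IsHamiltonianCycle.edgeSet_fromEdgeSet {E : Set (Sym2 (Fin m × Fin n))}
    (h : IsHamiltonianCycle m n E) : (fromEdgeSet E).edgeSet = E :=
  ((edgeSet_eq_iff _ _).2 ⟨rfl, Set.subset_compl_iff_disjoint_right.1
    (h.1.trans (edgeSet_subset_compl_diagSet _))⟩)

lemma numHamCycles_eq_ncard :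
    numHamCycles m n = {G | IsHamCycleSubgraph m n G}.ncard := by
  have himage :
      {E | IsHamiltonianCycle m n E} = edgeSet '' {G | IsHamCycleSubgraph m n G} := by
    ext E
    constructor
    · intro (h : IsHamiltonianCycle m n E)
      refine ⟨fromEdgeSet E, ?_, h.edgeSet_fromEdgeSet⟩
      rw [Set.mem_ofPred_eq, ← isHamiltonianCycle_edgeSet_iff, h.edgeSet_fromEdgeSet]
      exact h
    · rintro ⟨G, hG, rfl⟩
      exact isHamiltonianCycle_edgeSet_iff.2 hG
  rw [numHamCycles, himage, Set.ncard_image_of_injective _ edgeSet_injective]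

lemma IsHamCycleSubgraph.degree_eq {G : SimpleGraph (Fin m × Fin n)}
    (hG : IsHamCycleSubgraph m n G) {r j : ℕ} (hr : r < m) (hj : j < n) :
    horiz G r j + horiz G r (j + 1) + vert G r j + vert G (r + 1) j = 2 :=
  (ncard_neighborSet hG.1 (⟨r, hr⟩, ⟨j, hj⟩)).symm.trans (hG.2.2 _)

end General

section Snake

variable {n : ℕ} {S : Set ℕ}

-- The snake with choice set `S`: between columns `j - 1` and `j` it uses rows 0 and 2 if `j` is
-- odd, and row 1 together with row 0 (if `j / 2 ∈ S`) or row 2 (otherwise) if `j` is even; its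
-- vertical edges are the ones that degree 2 then forces.
def SnakeHoriz (S : Set ℕ) (r j : ℕ) : Prop :=
  if j % 2 = 1 then r ≠ 1 else r = 1 ∨ (r = 0 ↔ j / 2 ∈ S)

def SnakeVert (n : ℕ) (S : Set ℕ) (r j : ℕ) : Prop :=
  j = 0 ∨ j + 1 = n ∨ (r = 2 ↔ (j + 1) / 2 ∈ S)

def snake (n : ℕ) (S : Set ℕ) : SimpleGraph (Fin 3 × Fin n) :=
  fromRel fun a b =>
    (IsRightStep a b ∧ SnakeHoriz S b.1 b.2) ∨ (IsDownStep a b ∧ SnakeVert n S b.1 b.2)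

lemma snake_adj_of_isRightStep {a b : Fin 3 × Fin n} (h : IsRightStep a b) :
    (snake n S).Adj a b ↔ SnakeHoriz S b.1 b.2 := by
  obtain ⟨h1, h2⟩ := h
  simp only [snake, fromRel_adj, IsRightStep, IsDownStep, Fin.ext_iff] at *
  constructor
  · rintro ⟨-, (⟨-, h⟩ | ⟨h, -⟩) | (⟨h, -⟩ | ⟨h, -⟩)⟩ <;> first | exact h | omega
  · intro h
    exact ⟨fun h' => by simp [h'] at h2, Or.inl (Or.inl ⟨⟨h1, h2⟩, h⟩)⟩

lemma snake_adj_of_isDownStep {a b : Fin 3 × Fin n} (h : IsDownStep a b) :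
    (snake n S).Adj a b ↔ SnakeVert n S b.1 b.2 := by
  obtain ⟨h1, h2⟩ := h
  simp only [snake, fromRel_adj, IsRightStep, IsDownStep, Fin.ext_iff] at *
  constructor
  · rintro ⟨-, (⟨h, -⟩ | ⟨-, h⟩) | (⟨h, -⟩ | ⟨h, -⟩)⟩ <;> first | exact h | omega
  · intro h
    exact ⟨fun h' => by simp [h'] at h2, Or.inl (Or.inr ⟨⟨h1, h2⟩, h⟩)⟩

lemma snake_le_gridGraph : snake n S ≤ gridGraph 3 n := by
  rintro a b ⟨-, ((⟨h, -⟩ | ⟨h, -⟩) | (⟨h, -⟩ | ⟨h, -⟩))⟩ <;> rw [gridGraph_adj_iff] <;>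
    simp only [h, true_or, or_true]

lemma horizAdj_snake {r j : ℕ} :
    HorizAdj (snake n S) r j ↔ r < 3 ∧ 0 < j ∧ j < n ∧ SnakeHoriz S r j := by
  constructor
  · rintro ⟨a, b, h, rfl, rfl, hab⟩
    exact ⟨b.1.2, by have := h.2; omega, b.2.2, (snake_adj_of_isRightStep h).1 hab⟩
  · rintro ⟨hr, hj0, hj, hS⟩
    have h : IsRightStep ((⟨r, hr⟩, ⟨j - 1, by omega⟩) : Fin 3 × Fin n) (⟨r, hr⟩, ⟨j, hj⟩) :=
      ⟨rfl, by simp only; omega⟩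
    exact ⟨_, _, h, rfl, rfl, (snake_adj_of_isRightStep h).2 hS⟩

lemma vertAdj_snake {r j : ℕ} :
    VertAdj (snake n S) r j ↔ 0 < r ∧ r < 3 ∧ j < n ∧ SnakeVert n S r j := by
  constructor
  · rintro ⟨a, b, h, rfl, rfl, hab⟩
    exact ⟨by have := h.2; omega, b.1.2, b.2.2, (snake_adj_of_isDownStep h).1 hab⟩
  · rintro ⟨hr0, hr, hj, hS⟩
    have h : IsDownStep ((⟨r - 1, by omega⟩, ⟨j, hj⟩) : Fin 3 × Fin n) (⟨r, hr⟩, ⟨j, hj⟩) :=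
      ⟨rfl, by simp only; omega⟩
    exact ⟨_, _, h, rfl, rfl, (snake_adj_of_isDownStep h).2 hS⟩

open Classical in
lemma horiz_snake {r j : ℕ} :
    horiz (snake n S) r j = if r < 3 ∧ 0 < j ∧ j < n ∧ SnakeHoriz S r j then 1 else 0 := by
  rw [horiz]
  simp only [horizAdj_snake]

open Classical in
lemma vert_snake {r j : ℕ} :
    vert (snake n S) r j = if 0 < r ∧ r < 3 ∧ j < n ∧ SnakeVert n S r j then 1 else 0 := by
  rw [vert]
  simp only [vertAdj_snake]

lemma ncard_neighborSet_snake (hn : Even n) (v : Fin 3 × Fin n) :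
    ((snake n S).neighborSet v).ncard = 2 := by
  obtain ⟨⟨r, hr⟩, ⟨j, hj⟩⟩ := v
  rw [ncard_neighborSet snake_le_gridGraph]
  simp only [horiz_snake, vert_snake, SnakeHoriz, SnakeVert]
  obtain ⟨k, rfl⟩ := hn
  obtain ⟨i, rfl | rfl⟩ : ∃ i, j = 2 * i ∨ j = 2 * i + 1 := ⟨j / 2, by omega⟩
  · have e1 : (2 * i) % 2 = 0 := by omega
    have e2 : (2 * i + 1) % 2 = 1 := by omega
    have e3 : (2 * i) / 2 = i := by omega
    have e4 : (2 * i + 1) / 2 = i := by omega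
    by_cases hi : i ∈ S <;>
      simp only [e1, e2, e3, e4, hi, Nat.reduceEqDiff, ↓reduceIte, iff_true, iff_false] <;>
      split_ifs <;> omega
  · have e1 : (2 * i + 1) % 2 = 1 := by omega
    have e2 : (2 * i + 1 + 1) % 2 = 0 := by omega
    have e3 : (2 * i + 1 + 1) / 2 = i + 1 := by omega
    by_cases hi : i + 1 ∈ S <;>
      simp only [e1, e2, e3, hi, Nat.reduceEqDiff, ↓reduceIte, iff_true, iff_false,
        false_or] <;>
      split_ifs <;> omega

lemma snakeHoriz_or_snakeVert (n : ℕ) (S : Set ℕ) {r : ℕ} (j : ℕ) (hr : r < 3) :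
    SnakeHoriz S r j ∨ (r + 1 < 3 ∧ SnakeVert n S (r + 1) j ∧ SnakeHoriz S (r + 1) j) ∨
      (0 < r ∧ SnakeVert n S r j ∧ SnakeHoriz S (r - 1) j) := by
  simp only [SnakeHoriz, SnakeVert]
  obtain ⟨i, rfl | rfl⟩ : ∃ i, j = 2 * i ∨ j = 2 * i + 1 := ⟨j / 2, by omega⟩
  · have e1 : (2 * i) % 2 = 0 := by omega
    have e2 : (2 * i) / 2 = i := by omega
    have e3 : (2 * i + 1) / 2 = i := by omega
    by_cases hi : i ∈ S <;> interval_cases r <;> simp [e1, e2, e3, hi]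
  · have e1 : (2 * i + 1) % 2 = 1 := by omega
    by_cases hi : (2 * i + 1 + 1) / 2 ∈ S <;> interval_cases r <;> simp [e1, hi]

lemma snake_exists_adj_left {w : Fin 3 × Fin n} (hw : 0 < (w.2 : ℕ))
    (h : SnakeHoriz S w.1 w.2) : ∃ u, IsRightStep u w ∧ (snake n S).Adj w u := by
  obtain ⟨u, hu, huw⟩ :=
    (horizAdj_iff_exists_left w).1 (horizAdj_snake.2 ⟨w.1.2, hw, w.2.2, h⟩)
  exact ⟨u, hu, huw.symm⟩

lemma snake_exists_reachable_left {v : Fin 3 × Fin n} (hv : 0 < (v.2 : ℕ)) :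
    ∃ u : Fin 3 × Fin n, (u.2 : ℕ) + 1 = v.2 ∧ (snake n S).Reachable v u := by
  rcases snakeHoriz_or_snakeVert n S v.2 v.1.2 with h | ⟨hr, hV, hH⟩ | ⟨hr, hV, hH⟩
  · obtain ⟨u, hu, hvu⟩ := snake_exists_adj_left hv h
    exact ⟨u, hu.2, hvu.reachable⟩
  · obtain ⟨w, hw, hvw⟩ :=
      (vertAdj_iff_exists_down v).1 (vertAdj_snake.2 ⟨by omega, hr, v.2.2, hV⟩)
    obtain ⟨h1, h2⟩ := hw
    obtain ⟨u, hu, hwu⟩ := snake_exists_adj_left (w := w) (by rwa [← h1])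
      (by rwa [← h1, ← h2])
    exact ⟨u, by rw [hu.2, ← h1], hvw.reachable.trans hwu.reachable⟩
  · obtain ⟨w, hw, hwv⟩ :=
      (vertAdj_iff_exists_up v).1 (vertAdj_snake.2 ⟨hr, v.1.2, v.2.2, hV⟩)
    obtain ⟨h1, h2⟩ := hw
    obtain ⟨u, hu, hwu⟩ := snake_exists_adj_left (w := w) (by rwa [h1])
      (by rwa [h1, show (w.1 : ℕ) = v.1 - 1 by omega])
    exact ⟨u, by rw [hu.2, h1], hwv.symm.reachable.trans hwu.reachable⟩

lemma snake_connected (hn : 0 < n) : (snake n S).Connected := by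
  let o : Fin 3 × Fin n := (0, ⟨0, hn⟩)
  have column_zero : ∀ r (hr : r < 3), (snake n S).Reachable o (⟨r, hr⟩, ⟨0, hn⟩) := by
    intro r hr
    induction r with
    | zero => rfl
    | succ r ih =>
      have h : IsDownStep ((⟨r, by omega⟩, ⟨0, hn⟩) : Fin 3 × Fin n) (⟨r + 1, hr⟩, ⟨0, hn⟩) :=
        ⟨rfl, rfl⟩
      exact (ih (by omega)).trans ((snake_adj_of_isDownStep h).2 (Or.inl rfl)).reachable
  have reach : ∀ j (v : Fin 3 × Fin n), (v.2 : ℕ) = j → (snake n S).Reachable o v := by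
    intro j
    induction j with
    | zero =>
      rintro ⟨⟨r, hr⟩, ⟨j, hj⟩⟩ rfl
      exact column_zero r hr
    | succ j ih =>
      intro v hv
      obtain ⟨u, hu, hvu⟩ := snake_exists_reachable_left (S := S) (v := v) (by omega)
      exact (ih u (by omega)).trans hvu.symm
  exact (connected_iff_exists_forall_reachable _).2 ⟨o, fun v => reach _ v rfl⟩

end Snake

section ThreeRows

variable {n : ℕ} {G : SimpleGraph (Fin 3 × Fin n)}

lemma IsHamCycleSubgraph.horiz_pos (hG : IsHamCycleSubgraph 3 n G) {j : ℕ} (hj0 : 0 < j)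
    (hj : j < n) : 0 < horiz G 0 j + horiz G 1 j + horiz G 2 j := by
  obtain ⟨r, hr⟩ := exists_horizAdj_of_connected hG.1 hG.2.1 hj0 hj
  have hr3 := hr.bounds.1
  rw [← horiz_eq_one_iff] at hr
  interval_cases r <;> omega

lemma IsHamCycleSubgraph.column_degrees (hG : IsHamCycleSubgraph 3 n G) {j : ℕ}
    (hj : j < n) :
    horiz G 0 j + horiz G 0 (j + 1) + vert G 1 j = 2 ∧
      horiz G 1 j + horiz G 1 (j + 1) + vert G 1 j + vert G 2 j = 2 ∧
      horiz G 2 j + horiz G 2 (j + 1) + vert G 2 j = 2 := by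
  have h0 := hG.degree_eq (r := 0) (by omega) hj
  have h1 := hG.degree_eq (r := 1) (by omega) hj
  have h2 := hG.degree_eq (r := 2) (by omega) hj
  simp only [zero_add, Nat.reduceAdd, vert_eq_zero (G := G) (r := 0) (j := j) (by omega),
    vert_eq_zero (G := G) (r := 3) (j := j) (by omega)] at h0 h1 h2
  omega

lemma IsHamCycleSubgraph.horiz_pattern (hG : IsHamCycleSubgraph 3 n G) {j : ℕ}
    (hj0 : 0 < j) (hj : j < n) :
    (j % 2 = 1 → horiz G 0 j = 1 ∧ horiz G 1 j = 0 ∧ horiz G 2 j = 1) ∧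
    (j % 2 = 0 → horiz G 1 j = 1 ∧ horiz G 0 j + horiz G 2 j = 1) := by
  have hle := fun r j => And.intro (horiz_le_one (G := G) r j) (vert_le_one (G := G) r j)
  induction j, hj0 using Nat.le_induction with
  | base =>
    have := hG.column_degrees (j := 0) (by omega)
    simp only [zero_add] at this
    have := horiz_eq_zero (G := G) (r := 0) (j := 0) (by omega)
    have := horiz_eq_zero (G := G) (r := 1) (j := 0) (by omega)
    have := horiz_eq_zero (G := G) (r := 2) (j := 0) (by omega)
    have := hle 0 1; have := hle 1 1; have := hle 2 1; have := hle 1 0; have := hle 2 0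
    simp only [Nat.succ_eq_add_one, zero_add]
    omega
  | succ j hj0 ih =>
    have := ih (by omega)
    have := hG.column_degrees (j := j) (by omega)
    -- excludes the column in which rows 0 and 2 both turn into row 1
    have := hG.horiz_pos (j := j + 1) (by omega) hj
    have := hle 0 (j + 1); have := hle 1 (j + 1); have := hle 2 (j + 1)
    have := hle 1 j; have := hle 2 j
    omega

def topCrossings (G : SimpleGraph (Fin 3 × Fin n)) : Set ℕ := {i | HorizAdj G 0 (2 * i)}

lemma IsHamCycleSubgraph.horizAdj_iff_snakeHoriz (hG : IsHamCycleSubgraph 3 n G) {r j : ℕ}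
    (hr : r < 3) (hj0 : 0 < j) (hj : j < n) :
    HorizAdj G r j ↔ SnakeHoriz (topCrossings G) r j := by
  have hp := hG.horiz_pattern hj0 hj
  have htop : j / 2 ∈ topCrossings G ↔ horiz G 0 (2 * (j / 2)) = 1 := horiz_eq_one_iff.symm
  rw [← horiz_eq_one_iff, SnakeHoriz, htop]
  split_ifs with hpar
  · interval_cases r <;> omega
  · rw [show 2 * (j / 2) = j by omega]
    interval_cases r <;> omega

lemma IsHamCycleSubgraph.vertAdj_iff_snakeVert (hG : IsHamCycleSubgraph 3 n G) {r j : ℕ}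
    (hr0 : 0 < r) (hr : r < 3) (hj : j < n) :
    VertAdj G r j ↔ SnakeVert n (topCrossings G) r j := by
  have hdeg := hG.column_degrees hj
  have hle := fun r j => And.intro (horiz_le_one (G := G) r j) (vert_le_one (G := G) r j)
  have htop : (j + 1) / 2 ∈ topCrossings G ↔ horiz G 0 (2 * ((j + 1) / 2)) = 1 :=
    horiz_eq_one_iff.symm
  rw [← vert_eq_one_iff, SnakeVert, htop]
  rcases Nat.eq_zero_or_pos j with rfl | hj0
  · simp only [zero_add] at hdeg
    have := horiz_eq_zero (G := G) (r := 0) (j := 0) (by omega)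
    have := horiz_eq_zero (G := G) (r := 1) (j := 0) (by omega)
    have := horiz_eq_zero (G := G) (r := 2) (j := 0) (by omega)
    have := hle 0 1; have := hle 1 1; have := hle 2 1
    interval_cases r <;> omega
  have hp := hG.horiz_pattern hj0 hj
  by_cases hjn : j + 1 = n
  · have := horiz_eq_zero (G := G) (r := 0) (j := j + 1) (by omega)
    have := horiz_eq_zero (G := G) (r := 1) (j := j + 1) (by omega)
    have := horiz_eq_zero (G := G) (r := 2) (j := j + 1) (by omega)
    interval_cases r <;> omega
  have hp' := hG.horiz_pattern (j := j + 1) (by omega) (by omega)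
  have := hle 1 j; have := hle 2 j
  by_cases hpar : j % 2 = 0
  · rw [show 2 * ((j + 1) / 2) = j by omega]
    interval_cases r <;> omega
  · rw [show 2 * ((j + 1) / 2) = j + 1 by omega]
    interval_cases r <;> omega

lemma IsHamCycleSubgraph.eq_snake (hG : IsHamCycleSubgraph 3 n G) :
    G = snake n (topCrossings G) := by
  refine ext_of_le_gridGraph hG.1 snake_le_gridGraph (fun r j => ?_) (fun r j => ?_)
  · rw [horizAdj_snake]
    refine ⟨fun h => ?_, fun ⟨hr, hj0, hj, h⟩ => (hG.horizAdj_iff_snakeHoriz hr hj0 hj).2 h⟩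
    obtain ⟨hr, hj0, hj⟩ := h.bounds
    exact ⟨hr, hj0, hj, (hG.horizAdj_iff_snakeHoriz hr hj0 hj).1 h⟩
  · rw [vertAdj_snake]
    refine ⟨fun h => ?_, fun ⟨hr0, hr, hj, h⟩ => (hG.vertAdj_iff_snakeVert hr0 hr hj).2 h⟩
    obtain ⟨hr0, hr, hj⟩ := h.bounds
    exact ⟨hr0, hr, hj, (hG.vertAdj_iff_snakeVert hr0 hr hj).1 h⟩

end ThreeRows

section Counting

variable {k : ℕ}

lemma topCrossings_subset_Ioo (G : SimpleGraph (Fin 3 × Fin (2 * k))) :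
    topCrossings G ⊆ Set.Ioo 0 k := fun i hi => by
  obtain ⟨-, h0, hk⟩ := HorizAdj.bounds hi
  exact ⟨by omega, by omega⟩

lemma topCrossings_snake {S : Set ℕ} (hS : S ⊆ Set.Ioo 0 k) :
    topCrossings (snake (2 * k) S) = S := by
  ext i
  have e1 : (2 * i) % 2 = 0 := by omega
  have e2 : (2 * i) / 2 = i := by omega
  simp only [topCrossings, Set.mem_ofPred_eq, horizAdj_snake, SnakeHoriz, e1, e2]
  constructor
  · rintro ⟨-, -, -, h⟩
    simpa using h
  · intro hi
    obtain ⟨h0, hk⟩ := hS hi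
    exact ⟨by omega, by omega, by omega, by simp [hi]⟩

lemma setOf_isHamCycleSubgraph_eq_image (hk : 0 < k) :
    {G | IsHamCycleSubgraph 3 (2 * k) G} = snake (2 * k) '' 𝒫 Set.Ioo 0 k := by
  ext G
  constructor
  · intro (hG : IsHamCycleSubgraph 3 (2 * k) G)
    exact ⟨topCrossings G, topCrossings_subset_Ioo G, hG.eq_snake.symm⟩
  · rintro ⟨S, -, rfl⟩
    exact ⟨snake_le_gridGraph, snake_connected (by omega),
      ncard_neighborSet_snake (even_two_mul k)⟩

lemma injOn_snake : Set.InjOn (snake (2 * k)) (𝒫 Set.Ioo 0 k) :=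
  Set.LeftInvOn.injOn (f₁' := topCrossings) fun _ hS => topCrossings_snake hS

end Counting

end GridGraph

/-- For every integer `k ≥ 1`, the grid graph `P_3 × P_{2k}` has exactly
`2^(k-1)` Hamiltonian cycles: `H(3, 2k) = 2^(k-1)`. -/
theorem H_three_even : ∀ k : ℕ, 1 ≤ k → numHamCycles 3 (2 * k) = 2 ^ (k - 1) := by
  intro k hk
  rw [GridGraph.numHamCycles_eq_ncard, GridGraph.setOf_isHamCycleSubgraph_eq_image hk,
    GridGraph.injOn_snake.ncard_image, Set.ncard_powerset _ (Set.finite_Ioo 0 k),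
    ← Finset.coe_Ioo, Set.ncard_coe_finset, Nat.card_Ioo, Nat.sub_zero]
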